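/- Let k be an algebraically closed field of characteristic ≠ 2, N ≥ 3, and Z ⊂ P^N_k the smooth complete intersection of the two quadrics q = X_0^2 + ... + X_N^2 and q' = a_0 X_0^2 + ... + a_N X_N^2, where the a_i ∈ k are pairwise distinct. If M is an (N+1)×(N+1) matrix over k such that over the dual numbers A = k[ε]/(ε²), the substitution by g = Id + εM sends both q and q' into the A-span of {q, q'}, then M is a scalar matrix. Consequently, the tangent space at the identity of the group of projective automorphisms preserving Z is trivial. -/
import Mathlib


/-!
Statement 15: Let `k` be algebraically closed of characteristic `≠ 2`, `N ≥ 3`, and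
`Z ⊆ ℙ^N_k` the smooth complete intersection of the quadrics `q = X₀² + … + X_N²` and
`q' = a₀X₀² + … + a_N X_N²` with the `aᵢ` pairwise distinct.  If `M` is an
`(N+1) × (N+1)` matrix over `k` such that, over the dual numbers `A = k[ε]/(ε²)`,
substitution by `g = Id + εM` sends both `q` and `q'` into the `A`-span of `{q, q'}`, then
`M` is a scalar matrix.  (Hence the tangent space at the identity of the group of projective
automorphisms preserving `Z` is trivial.)
-/

open MvPolynomial

noncomputable section

variable (k : Type) [Field k] (N : ℕ)

/-- Substitution of variables by the linear forms given by the rows of a matrix. -/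
def substMatrix {R : Type} [CommSemiring R] (g : Matrix (Fin (N + 1)) (Fin (N + 1)) R)
    (P : MvPolynomial (Fin (N + 1)) R) : MvPolynomial (Fin (N + 1)) R :=
  MvPolynomial.bind₁ (fun j => ∑ i, MvPolynomial.C (g j i) * MvPolynomial.X i) P

lemma aux_fs1 {n : Type} (j l p : n) :
    (Finsupp.single j 1 + Finsupp.single l 1 = Finsupp.single p 2) ↔ (j = p ∧ l = p) := by
  classical
  rw [show (Finsupp.single p 2 : n →₀ ℕ) = Finsupp.single p 1 + Finsupp.single p 1 by
    rw [← Finsupp.single_add]]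
  rw [Finsupp.single_add_single_eq_single_add_single one_ne_zero one_ne_zero]
  simp

lemma aux_fs2 {n : Type} (j l p r : n) (hpr : p ≠ r) :
    (Finsupp.single j 1 + Finsupp.single l 1 = Finsupp.single p 1 + Finsupp.single r 1) ↔
      ((j = p ∧ l = r) ∨ (j = r ∧ l = p)) := by
  classical
  rw [Finsupp.single_add_single_eq_single_add_single one_ne_zero one_ne_zero]
  simp [hpr]

lemma aux_term_eq {R : Type} {n : Type} [CommRing R] (a b : R) (x l : n) :
    (C a * X x) * (C b * X l) =
      C (a * b) * monomial (Finsupp.single x 1 + Finsupp.single l 1) (1 : R) := by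
  rw [C_apply, C_apply, X, X, monomial_mul, monomial_mul, monomial_mul]
  rw [zero_add, zero_add, mul_one, mul_one, C_mul_monomial, mul_one]

lemma aux_coeff_substMatrix {R : Type} [CommRing R] (g : Matrix (Fin (N + 1)) (Fin (N + 1)) R)
    (c : Fin (N + 1) → R) (d : Fin (N + 1) →₀ ℕ) :
    MvPolynomial.coeff d (substMatrix N g (∑ i, C (c i) * X i ^ 2)) =
      ∑ i, ∑ j, ∑ l, c i * (g i j * g i l) *
        MvPolynomial.coeff d (monomial (Finsupp.single j 1 + Finsupp.single l 1) (1 : R)) := by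
  unfold substMatrix
  rw [map_sum, MvPolynomial.coeff_sum]
  refine Finset.sum_congr rfl fun i _ => ?_
  simp only [map_mul, map_pow, bind₁_C_right, bind₁_X_right, sq, Finset.sum_mul_sum]
  rw [coeff_C_mul, MvPolynomial.coeff_sum, Finset.mul_sum]
  refine Finset.sum_congr rfl fun j _ => ?_
  rw [MvPolynomial.coeff_sum, Finset.mul_sum]
  refine Finset.sum_congr rfl fun l _ => ?_
  rw [aux_term_eq, coeff_C_mul]
  ring

lemma aux_coeff_substMatrix_sq {R : Type} [CommRing R]
    (g : Matrix (Fin (N + 1)) (Fin (N + 1)) R)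
    (c : Fin (N + 1) → R) (p : Fin (N + 1)) :
    MvPolynomial.coeff (Finsupp.single p 2) (substMatrix N g (∑ i, C (c i) * X i ^ 2)) =
      ∑ i, c i * (g i p * g i p) := by
  rw [aux_coeff_substMatrix]
  refine Finset.sum_congr rfl fun i _ => ?_
  simp [coeff_monomial, aux_fs1, ite_and, mul_ite, Finset.sum_ite_eq']

lemma aux_coeff_substMatrix_mixed {R : Type} [CommRing R]
    (g : Matrix (Fin (N + 1)) (Fin (N + 1)) R)
    (c : Fin (N + 1) → R) (p r : Fin (N + 1)) (hpr : p ≠ r) :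
    MvPolynomial.coeff (Finsupp.single p 1 + Finsupp.single r 1)
        (substMatrix N g (∑ i, C (c i) * X i ^ 2)) =
      ∑ i, (c i * (g i p * g i r) + c i * (g i r * g i p)) := by
  rw [aux_coeff_substMatrix]
  refine Finset.sum_congr rfl fun i _ => ?_
  have key : ∀ j l : Fin (N + 1),
      (if (Finsupp.single j 1 + Finsupp.single l 1 = Finsupp.single p 1 + Finsupp.single r 1)
        then (1 : R) else 0) =
      (if j = p ∧ l = r then (1 : R) else 0) + (if j = r ∧ l = p then (1 : R) else 0) := by
    intro j l
    have hf := aux_fs2 j l p r hpr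
    split_ifs with h1 h2 h3 h4 h5 <;> simp_all
  simp only [coeff_monomial, key, mul_add, Finset.sum_add_distrib, ite_and, mul_ite, mul_one,
    mul_zero, Finset.sum_ite_eq']
  simp

lemma aux_coeff_sq_form {R : Type} [CommRing R] (c : Fin (N + 1) → R) (p : Fin (N + 1)) :
    MvPolynomial.coeff (Finsupp.single p 2) (∑ i, C (c i) * X i ^ 2) = c p := by
  classical
  simp [MvPolynomial.coeff_sum, coeff_C_mul, coeff_X_pow, Finsupp.single_left_inj (two_ne_zero),
    Finset.sum_ite_eq']

lemma aux_coeff_mixed_form {R : Type} [CommRing R] (c : Fin (N + 1) → R) (p r : Fin (N + 1))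
    (hpr : p ≠ r) :
    MvPolynomial.coeff (Finsupp.single p 1 + Finsupp.single r 1) (∑ i, C (c i) * X i ^ 2) = 0 := by
  classical
  have h : ∀ i : Fin (N + 1),
      (Finsupp.single i (2:ℕ) : Fin (N+1) →₀ ℕ) ≠ Finsupp.single p 1 + Finsupp.single r 1 := by
    intro i h
    rw [show (Finsupp.single i 2 : Fin (N+1) →₀ ℕ) = Finsupp.single i 1 + Finsupp.single i 1 by
      rw [← Finsupp.single_add]] at h
    rcases (aux_fs2 i i p r hpr).1 h with ⟨h1, h2⟩ | ⟨h1, h2⟩ <;> exact hpr (h1 ▸ h2 ▸ rfl)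
  simp [MvPolynomial.coeff_sum, coeff_C_mul, coeff_X_pow, h]

set_option maxHeartbeats 2000000 in
theorem tangent_space_of_automorphisms_of_intersection_of_two_quadrics_trivial
    [IsAlgClosed k] (hchar : ringChar k ≠ 2) (hN : 3 ≤ N)
    (a : Fin (N + 1) → k) (ha : Function.Injective a)
    (M : Matrix (Fin (N + 1)) (Fin (N + 1)) k)
    (hpres :
      letI A := DualNumber k
      letI g : Matrix (Fin (N + 1)) (Fin (N + 1)) A :=
        1 + (DualNumber.eps : A) • (M.map (algebraMap k A))
      letI qA : MvPolynomial (Fin (N + 1)) A :=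
        MvPolynomial.map (algebraMap k A) (∑ i, (X i : MvPolynomial (Fin (N + 1)) k) ^ 2)
      letI q'A : MvPolynomial (Fin (N + 1)) A :=
        MvPolynomial.map (algebraMap k A)
          (∑ i, MvPolynomial.C (a i) * (X i : MvPolynomial (Fin (N + 1)) k) ^ 2)
      ∃ α β γ δ : A,
        substMatrix N g qA = MvPolynomial.C α * qA + MvPolynomial.C β * q'A ∧
        substMatrix N g q'A = MvPolynomial.C γ * qA + MvPolynomial.C δ * q'A) :
    ∃ c0 : k, M = c0 • (1 : Matrix (Fin (N + 1)) (Fin (N + 1)) k) := by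
  classical
  obtain ⟨α, β, γ, δ, h1, h2⟩ := hpres
  set gm : Matrix (Fin (N + 1)) (Fin (N + 1)) (DualNumber k) :=
    1 + (DualNumber.eps : DualNumber k) • (M.map (algebraMap k (DualNumber k))) with hgm
  have two_ne : (2 : k) ≠ 0 := Ring.two_ne_zero hchar
  -- rewrite the two quadrics as sums of the standard shape
  have hq : MvPolynomial.map (algebraMap k (DualNumber k)) (∑ i, (X i : MvPolynomial (Fin (N + 1)) k) ^ 2)
      = ∑ i, C ((fun i => (TrivSqZeroExt.inl ((fun _ => (1:k)) i) : DualNumber k)) i) * X i ^ 2 := by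
    simp
  have hq' : MvPolynomial.map (algebraMap k (DualNumber k))
        (∑ i, MvPolynomial.C (a i) * (X i : MvPolynomial (Fin (N + 1)) k) ^ 2)
      = ∑ i, C ((fun i => (TrivSqZeroExt.inl (a i) : DualNumber k)) i) * X i ^ 2 := by
    simp only [map_sum, map_mul, map_pow, MvPolynomial.map_C, MvPolynomial.map_X,
      TrivSqZeroExt.algebraMap_eq_inl]
  rw [hq, hq'] at h1 h2
  -- entries of the matrix
  have hgme : ∀ i j, gm i j = (if i = j then (1:DualNumber k) else 0) + TrivSqZeroExt.inr (M i j) := by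
    intro i j
    rw [hgm]
    simp only [Matrix.add_apply, Matrix.smul_apply, Matrix.map_apply, Matrix.one_apply,
      smul_eq_mul, TrivSqZeroExt.algebraMap_eq_inl]
    congr 1
    apply TrivSqZeroExt.ext <;>
      simp [TrivSqZeroExt.fst_mul, TrivSqZeroExt.snd_mul, TrivSqZeroExt.algebraMap_eq_inl]
  -- diagonal-coefficient sums
  have hsum : ∀ (c : Fin (N + 1) → k) (p : Fin (N + 1)),
      ∑ i, (TrivSqZeroExt.inl (c i) : DualNumber k) * (gm i p * gm i p) =
        TrivSqZeroExt.inl (c p) + TrivSqZeroExt.inr (2 * (c p * M p p)) := by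
    intro c p
    rw [Finset.sum_eq_single p]
    · rw [hgme p p, if_pos rfl]
      apply TrivSqZeroExt.ext <;> simp [TrivSqZeroExt.fst_mul, TrivSqZeroExt.snd_mul] <;> ring
    · intro i _ hip
      rw [hgme i p, if_neg hip, zero_add]
      apply TrivSqZeroExt.ext <;> simp [TrivSqZeroExt.fst_mul, TrivSqZeroExt.snd_mul]
    · simp
  -- mixed-coefficient sums
  have hmix : ∀ (c : Fin (N + 1) → k) (p r : Fin (N + 1)), p ≠ r →
      ∑ i, ((TrivSqZeroExt.inl (c i) : DualNumber k) * (gm i p * gm i r) +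
            (TrivSqZeroExt.inl (c i) : DualNumber k) * (gm i r * gm i p)) =
        TrivSqZeroExt.inr (2 * (c p * M p r + c r * M r p)) := by
    intro c p r hpr
    rw [show (Finset.univ : Finset (Fin (N + 1))) = Finset.univ from rfl]
    rw [← Finset.sum_subset (Finset.subset_univ ({p, r} : Finset (Fin (N + 1))))
      (by
        intro i _ hi
        simp only [Finset.mem_insert, Finset.mem_singleton, not_or] at hi
        rw [hgme i p, hgme i r, if_neg hi.1, if_neg hi.2, zero_add, zero_add]
        apply TrivSqZeroExt.ext <;>
          simp [TrivSqZeroExt.fst_mul, TrivSqZeroExt.snd_mul])]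
    rw [Finset.sum_pair hpr]
    rw [hgme p p, hgme p r, hgme r p, hgme r r, if_pos rfl, if_pos rfl, if_neg hpr,
      if_neg (Ne.symm hpr), zero_add, zero_add]
    apply TrivSqZeroExt.ext <;> simp [TrivSqZeroExt.fst_mul, TrivSqZeroExt.snd_mul] <;> ring
  -- extract the equations at the diagonal monomials
  have ediag : ∀ p : Fin (N + 1),
      TrivSqZeroExt.inl ((1:k)) + TrivSqZeroExt.inr (2 * (1 * M p p)) =
        α * TrivSqZeroExt.inl 1 + β * TrivSqZeroExt.inl (a p) ∧
      TrivSqZeroExt.inl (a p) + TrivSqZeroExt.inr (2 * (a p * M p p)) =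
        γ * TrivSqZeroExt.inl 1 + δ * TrivSqZeroExt.inl (a p) := by
    intro p
    constructor
    · have e := congrArg (MvPolynomial.coeff (Finsupp.single p 2)) h1
      rwa [aux_coeff_substMatrix_sq, hsum, MvPolynomial.coeff_add, coeff_C_mul, coeff_C_mul,
        aux_coeff_sq_form, aux_coeff_sq_form] at e
    · have e := congrArg (MvPolynomial.coeff (Finsupp.single p 2)) h2
      rwa [aux_coeff_substMatrix_sq, hsum, MvPolynomial.coeff_add, coeff_C_mul, coeff_C_mul,
        aux_coeff_sq_form, aux_coeff_sq_form] at e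
  -- extract the equations at the mixed monomials
  have emix : ∀ p r : Fin (N + 1), p ≠ r →
      (2 * ((1:k) * M p r + 1 * M r p) = 0 ∧ 2 * (a p * M p r + a r * M r p) = 0) := by
    intro p r hpr
    constructor
    · have e := congrArg (MvPolynomial.coeff (Finsupp.single p 1 + Finsupp.single r 1)) h1
      rw [aux_coeff_substMatrix_mixed _ _ _ _ _ hpr, hmix _ _ _ hpr, MvPolynomial.coeff_add,
        coeff_C_mul, coeff_C_mul, aux_coeff_mixed_form _ _ _ _ hpr,
        aux_coeff_mixed_form _ _ _ _ hpr, mul_zero, mul_zero, add_zero] at e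
      have := congrArg TrivSqZeroExt.snd e
      simpa using this
    · have e := congrArg (MvPolynomial.coeff (Finsupp.single p 1 + Finsupp.single r 1)) h2
      rw [aux_coeff_substMatrix_mixed _ _ _ _ _ hpr, hmix _ _ _ hpr, MvPolynomial.coeff_add,
        coeff_C_mul, coeff_C_mul, aux_coeff_mixed_form _ _ _ _ hpr,
        aux_coeff_mixed_form _ _ _ _ hpr, mul_zero, mul_zero, add_zero] at e
      have := congrArg TrivSqZeroExt.snd e
      simpa using this
  -- off-diagonal entries vanish
  have hoff : ∀ p r : Fin (N + 1), p ≠ r → M p r = 0 := by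
    intro p r hpr
    obtain ⟨m1, m2⟩ := emix p r hpr
    have m1' : M p r + M r p = 0 := by
      have h := (mul_eq_zero.mp m1).resolve_left two_ne
      linear_combination h
    have m2' : a p * M p r + a r * M r p = 0 :=
      (mul_eq_zero.mp m2).resolve_left two_ne
    have hne : a p - a r ≠ 0 := sub_ne_zero.mpr (fun h => hpr (ha h))
    have : (a p - a r) * M p r = 0 := by linear_combination m2' - a r * m1'
    exact (mul_eq_zero.mp this).resolve_left hne
  -- diagonal equations in k
  have hdiag : ∀ p : Fin (N + 1),
      2 * M p p = TrivSqZeroExt.snd α + TrivSqZeroExt.snd β * a p ∧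
      2 * (a p * M p p) = TrivSqZeroExt.snd γ + TrivSqZeroExt.snd δ * a p := by
    intro p
    obtain ⟨e1, e2⟩ := ediag p
    constructor
    · have := congrArg TrivSqZeroExt.snd e1
      simpa [TrivSqZeroExt.snd_mul] using this
    · have := congrArg TrivSqZeroExt.snd e2
      simpa [TrivSqZeroExt.snd_mul] using this
  -- quadratic vanishing
  have key : ∀ p : Fin (N + 1),
      TrivSqZeroExt.snd β * a p ^ 2 +
        (TrivSqZeroExt.snd α - TrivSqZeroExt.snd δ) * a p - TrivSqZeroExt.snd γ = 0 := by
    intro p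
    obtain ⟨e1, e2⟩ := hdiag p
    linear_combination e2 - a p * e1
  -- three distinct values of a
  have hN1 : (1 : ℕ) < N + 1 := by omega
  have hN2 : (2 : ℕ) < N + 1 := by omega
  set p0 : Fin (N + 1) := ⟨0, by omega⟩
  set p1 : Fin (N + 1) := ⟨1, by omega⟩
  set p2 : Fin (N + 1) := ⟨2, by omega⟩
  have h01 : a p0 ≠ a p1 := fun h => by have := ha h; simp [p0, p1, Fin.ext_iff] at this
  have h02 : a p0 ≠ a p2 := fun h => by have := ha h; simp [p0, p2, Fin.ext_iff] at this
  have h12 : a p1 ≠ a p2 := fun h => by have := ha h; simp [p1, p2, Fin.ext_iff] at this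
  set b := TrivSqZeroExt.snd β
  set cc := TrivSqZeroExt.snd α - TrivSqZeroExt.snd δ
  have l01 : b * (a p0 + a p1) + cc = 0 := by
    have hne : a p0 - a p1 ≠ 0 := sub_ne_zero.mpr h01
    have : (a p0 - a p1) * (b * (a p0 + a p1) + cc) = 0 := by
      linear_combination key p0 - key p1
    exact (mul_eq_zero.mp this).resolve_left hne
  have l02 : b * (a p0 + a p2) + cc = 0 := by
    have hne : a p0 - a p2 ≠ 0 := sub_ne_zero.mpr h02
    have : (a p0 - a p2) * (b * (a p0 + a p2) + cc) = 0 := by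
      linear_combination key p0 - key p2
    exact (mul_eq_zero.mp this).resolve_left hne
  have hb : b = 0 := by
    have hne : a p1 - a p2 ≠ 0 := sub_ne_zero.mpr h12
    have : (a p1 - a p2) * b = 0 := by linear_combination l01 - l02
    exact (mul_eq_zero.mp this).resolve_left hne
  -- diagonal constant
  have hdiagconst : ∀ p : Fin (N + 1), M p p = M p0 p0 := by
    intro p
    have e1 := (hdiag p).1
    have e0 := (hdiag p0).1
    rw [hb] at e1 e0
    have : 2 * M p p = 2 * M p0 p0 := by linear_combination e1 - e0
    exact mul_left_cancel₀ two_ne this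
  refine ⟨M p0 p0, ?_⟩
  ext p r
  by_cases hpr : p = r
  · subst hpr
    simp [Matrix.smul_apply, Matrix.one_apply, hdiagconst p]
  · simp [Matrix.smul_apply, Matrix.one_apply, hpr, hoff p r hpr]

end
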